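/- With the Jordan–Wigner matrix model in M₂(ℝ)^{⊗N} and the functional φ_N, for every 1 ≤ i ≤ N: φ_N(T_{N,i}) = φ_N(T_{N,i}^*) = φ_N(T′_{N,i}) = 0; φ_N(T_{N,i}^* T_{N,i}^*) = φ_N(T_{N,i} T_{N,i}) = φ_N(T_{N,i} T_{N,i}^*) = φ_N(T_{N,i} T′_{N,i}) = φ_N(T′_{N,i} T′_{N,i}) = φ_N(T′_{N,i} T_{N,i}) = φ_N(T′_{N,i} T_{N,i}^*) = 0; and φ_N(T_{N,i}^* T_{N,i}) = 1, φ_N(T_{N,i}^* T′_{N,i}) = Ψ_i. -/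
import Mathlib


open Matrix
open scoped Kronecker BigOperators Classical

/-- The diagonal matrix `σ_x = [[1,0],[0,x]]`. -/
def sigmaM (x : ℝ) : Matrix (Fin 2) (Fin 2) ℝ := !![1, 0; 0, x]

/-- The matrix `γ_x = [[0,0],[x,0]]`. -/
def gammaM (x : ℝ) : Matrix (Fin 2) (Fin 2) ℝ := !![0, 0; x, 0]

/-- The iterated Kronecker product realizing `M₂(ℝ)^{⊗k}` inside `M_{2^k}(ℝ)`. -/
def tensorFold : (k : ℕ) → (Fin k → Matrix (Fin 2) (Fin 2) ℝ) →
    Matrix (Fin (2 ^ k)) (Fin (2 ^ k)) ℝ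
  | 0, _ => 1
  | k + 1, a =>
      Matrix.reindex (finProdFinEquiv.trans (finCongr (pow_succ 2 k).symm))
        (finProdFinEquiv.trans (finCongr (pow_succ 2 k).symm))
        ((tensorFold k fun j => a j.castSucc) ⊗ₖ a (Fin.last k))

/-- The Jordan–Wigner matrix
`T_{N,i} = σ_{Q(1,i)} ⊗ ⋯ ⊗ σ_{Q(i-1,i)} ⊗ γ_1 ⊗ σ_1 ⊗ ⋯ ⊗ σ_1` (slot `k` of the tensor
product corresponds to the index `k+1 ∈ {1,…,N}`). -/
def TN (N : ℕ) (Q : ℕ → ℕ → ℝ) (i : ℕ) : Matrix (Fin (2 ^ N)) (Fin (2 ^ N)) ℝ :=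
  tensorFold N fun k =>
    if (k : ℕ) + 1 < i then sigmaM (Q ((k : ℕ) + 1) i)
    else if (k : ℕ) + 1 = i then gammaM 1
    else sigmaM 1

/-- The extended Jordan–Wigner matrix
`T'_{N,i} = σ_{Q̃(1,i)} ⊗ ⋯ ⊗ σ_{Q̃(i-1,i)} ⊗ γ_{Ψ_i} ⊗ σ_{Q(i+1,i)Q̃(i+1,i)} ⊗ ⋯ ⊗ σ_{Q(N,i)Q̃(N,i)}`. -/
def TN' (N : ℕ) (Q Qt : ℕ → ℕ → ℝ) (Ψ : ℕ → ℝ) (i : ℕ) :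
    Matrix (Fin (2 ^ N)) (Fin (2 ^ N)) ℝ :=
  tensorFold N fun k =>
    if (k : ℕ) + 1 < i then sigmaM (Qt ((k : ℕ) + 1) i)
    else if (k : ℕ) + 1 = i then gammaM (Ψ i)
    else sigmaM (Q ((k : ℕ) + 1) i * Qt ((k : ℕ) + 1) i)

/-- The functional `φ_N(a_1 ⊗ ⋯ ⊗ a_N) = ∏ (a_k)_{11}`: the top-left entry. -/
def phiN (N : ℕ) (M : Matrix (Fin (2 ^ N)) (Fin (2 ^ N)) ℝ) : ℝ :=
  M ⟨0, pow_pos (by norm_num) N⟩ ⟨0, pow_pos (by norm_num) N⟩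

lemma tensorFold_mul (k : ℕ) (a b : Fin k → Matrix (Fin 2) (Fin 2) ℝ) :
    tensorFold k a * tensorFold k b = tensorFold k (fun j => a j * b j) := by
  induction k with
  | zero => simp [tensorFold]
  | succ k ih =>
      simp only [tensorFold, Matrix.reindex_apply, Matrix.submatrix_mul_equiv,
        ← Matrix.mul_kronecker_mul, ih]

lemma tensorFold_transpose (k : ℕ) (a : Fin k → Matrix (Fin 2) (Fin 2) ℝ) :
    (tensorFold k a)ᵀ = tensorFold k (fun j => (a j)ᵀ) := by
  induction k with
  | zero => simp [tensorFold]
  | succ k ih =>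
      simp only [tensorFold, Matrix.transpose_reindex, ← Matrix.kroneckerMap_transpose, ih]

lemma tensorFold_apply_zero (k : ℕ) (a : Fin k → Matrix (Fin 2) (Fin 2) ℝ)
    (h : 0 < 2 ^ k) :
    tensorFold k a ⟨0, h⟩ ⟨0, h⟩ = ∏ j, a j 0 0 := by
  induction k with
  | zero => simp [tensorFold, Matrix.one_apply]
  | succ k ih =>
      have hsym : (finProdFinEquiv.trans (finCongr (pow_succ 2 k).symm)).symm
          ⟨0, h⟩ = (⟨0, pow_pos (by norm_num) k⟩, 0) := by
        rw [Equiv.symm_apply_eq]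
        simp [finProdFinEquiv, finCongr]
      simp only [tensorFold, Matrix.reindex_apply, Matrix.submatrix_apply, hsym,
        Matrix.kroneckerMap_apply]
      rw [ih _ (pow_pos (by norm_num) k), Fin.prod_univ_castSucc]

lemma phiN_tensorFold (N : ℕ) (a : Fin N → Matrix (Fin 2) (Fin 2) ℝ) :
    phiN N (tensorFold N a) = ∏ j, a j 0 0 :=
  tensorFold_apply_zero N a _

@[simp] lemma sigmaM_transpose (x : ℝ) : (sigmaM x)ᵀ = sigmaM x := by
  ext i j; fin_cases i <;> fin_cases j <;> simp [sigmaM]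

@[simp] lemma sigmaM_zero_zero (x : ℝ) : sigmaM x 0 0 = 1 := rfl
@[simp] lemma gammaM_zero_zero (x : ℝ) : gammaM x 0 0 = 0 := rfl

@[simp] lemma sigmaM_mul_zero_zero (x y : ℝ) : (sigmaM x * sigmaM y) 0 0 = 1 := by
  simp [sigmaM, Matrix.mul_apply, Fin.sum_univ_two]

@[simp] lemma gammaM_mul_gammaM_zero_zero (x y : ℝ) : (gammaM x * gammaM y) 0 0 = 0 := by
  simp [gammaM, Matrix.mul_apply, Fin.sum_univ_two]

@[simp] lemma gammaMT_mul_gammaMT_zero_zero (x y : ℝ) :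
    ((gammaM x)ᵀ * (gammaM y)ᵀ) 0 0 = 0 := by
  simp [gammaM, Matrix.mul_apply, Fin.sum_univ_two]

@[simp] lemma gammaM_mul_gammaMT_zero_zero (x y : ℝ) :
    (gammaM x * (gammaM y)ᵀ) 0 0 = 0 := by
  simp [gammaM, Matrix.mul_apply, Fin.sum_univ_two]

@[simp] lemma gammaMT_mul_gammaM_zero_zero (x y : ℝ) :
    ((gammaM x)ᵀ * gammaM y) 0 0 = x * y := by
  rw [Matrix.mul_apply, Fin.sum_univ_two]
  simp [gammaM, Matrix.transpose_apply, Matrix.vecHead, Matrix.vecTail]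

/-- first and second moments of the Jordan–Wigner matrices with respect
to `φ_N`: all means vanish, all second mixed moments vanish except
`φ_N(T_{N,i}^* T_{N,i}) = 1` and `φ_N(T_{N,i}^* T'_{N,i}) = Ψ_i`. -/
theorem stmt12 (N : ℕ) (Q Qt : ℕ → ℕ → ℝ) (Ψ : ℕ → ℝ)
    (hQsymm : ∀ i j, Q i j = Q j i)
    (hQne : ∀ i j, i ≠ j → Q i j ≠ 0)
    (hQtne : ∀ i j, i ≠ j → Qt i j ≠ 0)
    (i : ℕ) (h1i : 1 ≤ i) (hiN : i ≤ N) :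
    phiN N (TN N Q i) = 0 ∧
    phiN N ((TN N Q i)ᵀ) = 0 ∧
    phiN N (TN' N Q Qt Ψ i) = 0 ∧
    phiN N ((TN N Q i)ᵀ * (TN N Q i)ᵀ) = 0 ∧
    phiN N (TN N Q i * TN N Q i) = 0 ∧
    phiN N (TN N Q i * (TN N Q i)ᵀ) = 0 ∧
    phiN N (TN N Q i * TN' N Q Qt Ψ i) = 0 ∧
    phiN N (TN' N Q Qt Ψ i * TN' N Q Qt Ψ i) = 0 ∧
    phiN N (TN' N Q Qt Ψ i * TN N Q i) = 0 ∧
    phiN N (TN' N Q Qt Ψ i * (TN N Q i)ᵀ) = 0 ∧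
    phiN N ((TN N Q i)ᵀ * TN N Q i) = 1 ∧
    phiN N ((TN N Q i)ᵀ * TN' N Q Qt Ψ i) = Ψ i := by
  -- the distinguished slot
  have hlt : i - 1 < N := by omega
  set k0 : Fin N := ⟨i - 1, hlt⟩ with hk0
  have hk0i : (k0 : ℕ) + 1 = i := by simp [hk0]; omega
  have hk0nlt : ¬ ((k0 : ℕ) + 1 < i) := by omega
  refine ⟨?_, ?_, ?_, ?_, ?_, ?_, ?_, ?_, ?_, ?_, ?_, ?_⟩ <;>
  · simp only [TN, TN', tensorFold_transpose, tensorFold_mul, phiN_tensorFold]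
    rw [Fintype.prod_eq_single k0 ?_]
    · by_cases h : ((k0 : ℕ) + 1 < i) <;>
        simp [hk0nlt, hk0i]
    · intro k hk
      have hne : (k : ℕ) + 1 ≠ i := by
        intro h
        apply hk; apply Fin.ext; simp [hk0]; omega
      by_cases h : ((k : ℕ) + 1 < i) <;> simp [h, hne]
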